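/- arXiv:2106.02615 — 4 statements merged into one kernel-verified Lean document; each statement's English description precedes it below -/
import Mathlib

section
/- For square real matrices (n = m), the transitive projector T(A) = Â⁽¹⁾ + Â⁽²⁾ − Â satisfies T(Aᵀ) = T(A)ᵀ; consequently ρ_T commutes with the symmetrization projector ρ_S(A,B) = ((A+Bᵀ)/2, (B+Aᵀ)/2). -/
open Matrix Finset

noncomputable def Tproj {n m : ℕ} (A : Matrix (Fin n) (Fin m) ℝ) :
    Matrix (Fin n) (Fin m) ℝ :=
  fun i j =>
    (1 / (m : ℝ)) * ∑ j' : Fin m, A i j'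
      + (1 / (n : ℝ)) * ∑ i' : Fin n, A i' j
      - (1 / ((n : ℝ) * (m : ℝ))) * ∑ i' : Fin n, ∑ j' : Fin m, A i' j'

lemma Tproj_transpose {n : ℕ} (A : Matrix (Fin n) (Fin n) ℝ) :
    Tproj Aᵀ = (Tproj A)ᵀ := by
  ext i j
  simp only [Tproj, transpose_apply]
  rw [Finset.sum_comm (s := Finset.univ) (t := Finset.univ) (f := fun i' j' => A j' i')]
  ring

lemma Tproj_lin {n : ℕ} (A B : Matrix (Fin n) (Fin n) ℝ) :
    Tproj ((1 / 2 : ℝ) • (A + B)) = (1 / 2 : ℝ) • (Tproj A + Tproj B) := by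
  ext i j
  simp only [Tproj, Matrix.smul_apply, Matrix.add_apply, smul_eq_mul, mul_add,
    Finset.sum_add_distrib, Finset.mul_sum]
  ring_nf
  simp only [← Finset.sum_mul, ← Finset.mul_sum]
  ring

theorem Tproj_transpose_commutes_rhoS {n : ℕ} :
    (∀ A : Matrix (Fin n) (Fin n) ℝ, Tproj Aᵀ = (Tproj A)ᵀ) ∧
    (∀ A B : Matrix (Fin n) (Fin n) ℝ,
      (Tproj ((1 / 2 : ℝ) • (A + Bᵀ)), Tproj ((1 / 2 : ℝ) • (B + Aᵀ)))
        = ((1 / 2 : ℝ) • (Tproj A + (Tproj B)ᵀ),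
           (1 / 2 : ℝ) • (Tproj B + (Tproj A)ᵀ))) := by
  refine ⟨Tproj_transpose, fun A B => ?_⟩
  rw [Tproj_lin, Tproj_lin, Tproj_transpose, Tproj_transpose]
end

section
/- If A is an n×n real antisymmetric matrix whose row sums are all zero (∑_j A_{ij} = 0 for all i), then T(A) = 0, where T(A) = Â⁽¹⁾ + Â⁽²⁾ − Â is the transitive projector. -/
open Matrix Finset

theorem Tproj_kills_cyclic {n : ℕ} (hn : 0 < n)
    (A : Matrix (Fin n) (Fin n) ℝ) (hA : Aᵀ = -A)
    (hrow : ∀ i, ∑ j : Fin n, A i j = 0) :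
    Tproj A = 0 := by
  have hcol : ∀ j, ∑ i : Fin n, A i j = 0 := by
    intro j
    have : ∑ i : Fin n, A i j = ∑ i : Fin n, -(A j i) := by
      apply Finset.sum_congr rfl
      intro i _
      have := congrFun (congrFun hA j) i
      simpa [Matrix.transpose_apply] using this
    rw [this, Finset.sum_neg_distrib, hrow, neg_zero]
  funext i j
  simp [Tproj, hrow, hcol]
end

section
/- Every n×n real antisymmetric matrix A decomposes uniquely as A = A_t + A_c where A_t is antisymmetric of the form (A_t)_{ij} = φ_i − φ_j for some φ ∈ ℝⁿ, and A_c is antisymmetric with all row sums equal to zero. -/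
/-!
The transitive part is forced by the row sums: if `(T, C)` is a decomposition then, since the rows
of `C` sum to zero, `T` has the row sums `r i = ∑ j, A i j` of `A`. For `T i j = φ i - φ j` these
are `n φ i - ∑ φ`, so `T i j = (r i - r j) / n` is determined by `A`. Conversely `φ = r / n` works
because antisymmetry gives `∑ r = 0`, and then `C = A - T` is antisymmetric with zero row sums.
-/

open Matrix Finset

variable {ι K : Type*}

def gradMatrix [Sub K] (φ : ι → K) : Matrix ι ι K :=
  of fun i j => φ i - φ j

@[simp]
theorem gradMatrix_apply [Sub K] (φ : ι → K) (i j : ι) : gradMatrix φ i j = φ i - φ j :=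
  rfl

theorem transpose_gradMatrix [AddCommGroup K] (φ : ι → K) : (gradMatrix φ)ᵀ = -gradMatrix φ := by
  ext i j
  simp

theorem sum_gradMatrix_apply [Fintype ι] [CommRing K] (φ : ι → K) (i : ι) :
    ∑ j, gradMatrix φ i j = Fintype.card ι * φ i - ∑ j, φ j := by
  simp [Finset.sum_sub_distrib]

section

variable [Fintype ι] [Field K]

theorem gradMatrix_eq_of_sum_apply_eq [CharZero K] {φ ψ : ι → K}
    (h : ∀ i, ∑ j, gradMatrix φ i j = ∑ j, gradMatrix ψ i j) : gradMatrix φ = gradMatrix ψ := by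
  ext i j
  have hcard : (Fintype.card ι : K) ≠ 0 := by
    have : Nonempty ι := ⟨i⟩
    exact_mod_cast Fintype.card_ne_zero
  have hi := h i
  have hj := h j
  simp only [sum_gradMatrix_apply] at hi hj
  have : (Fintype.card ι : K) * (φ i - φ j) = Fintype.card ι * (ψ i - ψ j) := by
    linear_combination hi - hj
  simpa using mul_left_cancel₀ hcard this

theorem sum_gradMatrix_div_card_apply [CharZero K] {r : ι → K} (hr : ∑ i, r i = 0) (i : ι) :
    ∑ j, gradMatrix (fun k => r k / Fintype.card ι) i j = r i := by
  have : Nonempty ι := ⟨i⟩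
  have hcard : (Fintype.card ι : K) ≠ 0 := by exact_mod_cast Fintype.card_ne_zero
  rw [sum_gradMatrix_apply, ← Finset.sum_div, hr]
  field_simp
  ring

theorem Matrix.sum_sum_eq_zero_of_transpose_eq_neg [CharZero K] {A : Matrix ι ι K}
    (hA : Aᵀ = -A) : ∑ i, ∑ j, A i j = 0 := by
  have h : ∑ i, ∑ j, A i j = -∑ i, ∑ j, A i j := by
    calc ∑ i, ∑ j, A i j = ∑ j, ∑ i, Aᵀ j i := Finset.sum_comm
      _ = ∑ j, ∑ i, -A j i := by rw [hA]; rfl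
      _ = -∑ i, ∑ j, A i j := by simp only [Finset.sum_neg_distrib]
  linear_combination h / 2

end

theorem antisymmetric_transitive_cyclic_decomposition {n : ℕ}
    (A : Matrix (Fin n) (Fin n) ℝ) (hA : Aᵀ = -A) :
    ∃! p : Matrix (Fin n) (Fin n) ℝ × Matrix (Fin n) (Fin n) ℝ,
      (∃ φ : Fin n → ℝ, ∀ i j, p.1 i j = φ i - φ j) ∧
      p.1ᵀ = -p.1 ∧ p.2ᵀ = -p.2 ∧
      (∀ i, ∑ j : Fin n, p.2 i j = 0) ∧
      A = p.1 + p.2 := by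
  set r : Fin n → ℝ := fun i => ∑ j, A i j
  set φ : Fin n → ℝ := fun i => r i / Fintype.card (Fin n)
  have hφ : ∀ i, ∑ j, gradMatrix φ i j = r i :=
    sum_gradMatrix_div_card_apply (sum_sum_eq_zero_of_transpose_eq_neg hA)
  refine ⟨(gradMatrix φ, A - gradMatrix φ), ⟨⟨φ, gradMatrix_apply φ⟩, transpose_gradMatrix φ,
    by rw [transpose_sub, hA, transpose_gradMatrix, neg_sub_neg, neg_sub], fun i => ?_,
    (add_sub_cancel _ _).symm⟩, ?_⟩
  · simp only [Matrix.sub_apply, Finset.sum_sub_distrib, hφ, r, sub_self]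
  rintro ⟨T, C⟩ ⟨⟨ψ, hψ⟩, -, -, hC, hAeq⟩
  dsimp only at hψ hC hAeq
  have hT : T = gradMatrix ψ := Matrix.ext hψ
  have hψφ : gradMatrix ψ = gradMatrix φ := gradMatrix_eq_of_sum_apply_eq fun i => by
    simp only [hφ, r, hAeq, hT, Matrix.add_apply, Finset.sum_add_distrib, hC i, add_zero]
  rw [hAeq, hT, hψφ, add_sub_cancel_left]
end

section
/- Any Nash equilibrium (x*, y*) of a zero-sum bimatrix game A is a fixed point of the CMWU update: for all i, x*_i · exp(h[Ay*]_i − hε[H_{y*}x*]_i) / (∑_k x*_k exp(h[Ay*]_k − hε[H_{y*}x*]_k)) = x*_i, and similarly for y* with the update using −h[Aᵀx*]_j − hε[H_{x*}y*]_j, where H_{y*} = A D_{y*} Aᵀ and H_{x*} = Aᵀ D_{x*} A. -/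
open Matrix Finset Real

/-- The probability simplex. -/
def simplex {k : ℕ} (x : Fin k → ℝ) : Prop :=
  (∀ i, 0 ≤ x i) ∧ ∑ i, x i = 1

lemma single_simplex {k : ℕ} (i : Fin k) : simplex (Pi.single i 1 : Fin k → ℝ) := by
  constructor
  · intro j
    rcases eq_or_ne j i with rfl | hji
    · simp
    · simp [Pi.single_apply, hji]
  · simp

theorem nash_fixed_point_of_CMWU {n m : ℕ}
    (A : Matrix (Fin n) (Fin m) ℝ)
    (xs : Fin n → ℝ) (ys : Fin m → ℝ)
    (hx : simplex xs) (hy : simplex ys)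
    (hNash1 : ∀ x' : Fin n → ℝ, simplex x' →
      x' ⬝ᵥ (A *ᵥ ys) ≤ xs ⬝ᵥ (A *ᵥ ys))
    (hNash2 : ∀ y' : Fin m → ℝ, simplex y' →
      xs ⬝ᵥ (A *ᵥ ys) ≤ xs ⬝ᵥ (A *ᵥ y'))
    (h ε : ℝ) (hh : 0 < h) (hε : 0 < ε) :
    (∀ i : Fin n,
      xs i * exp (h * (A *ᵥ ys) i
          - h * ε * ((A * Matrix.diagonal ys * Aᵀ) *ᵥ xs) i)
        / (∑ k : Fin n, xs k * exp (h * (A *ᵥ ys) k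
            - h * ε * ((A * Matrix.diagonal ys * Aᵀ) *ᵥ xs) k))
      = xs i) ∧
    (∀ j : Fin m,
      ys j * exp (-(h * (Aᵀ *ᵥ xs) j)
          - h * ε * ((Aᵀ * Matrix.diagonal xs * A) *ᵥ ys) j)
        / (∑ k : Fin m, ys k * exp (-(h * (Aᵀ *ᵥ xs) k)
            - h * ε * ((Aᵀ * Matrix.diagonal xs * A) *ᵥ ys) k))
      = ys j) := by
  set v : ℝ := xs ⬝ᵥ (A *ᵥ ys) with hv
  -- (A y)_i ≤ v for all i
  have hAyle : ∀ i, (A *ᵥ ys) i ≤ v := by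
    intro i
    have := hNash1 (Pi.single i 1) (single_simplex i)
    simpa [dotProduct, Pi.single_apply, ite_mul] using this
  -- v ≤ (Aᵀ x)_j for all j
  have hAtxge : ∀ j, v ≤ (Aᵀ *ᵥ xs) j := by
    intro j
    have := hNash2 (Pi.single j 1) (single_simplex j)
    have hc : xs ⬝ᵥ (A *ᵥ (Pi.single j 1 : Fin m → ℝ)) = (Aᵀ *ᵥ xs) j := by
      simp [dotProduct, Matrix.mulVec, Matrix.transpose_apply, Pi.single_apply,
        mul_comm]
    rwa [hc] at this
  -- equality on supports
  have hAy : ∀ i, 0 < xs i → (A *ᵥ ys) i = v := by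
    intro i hi
    by_contra hne
    have hlt : (A *ᵥ ys) i < v := lt_of_le_of_ne (hAyle i) hne
    have hsum : ∑ k, xs k * (A *ᵥ ys) k = v := by rw [hv]; rfl
    have hlt2 : ∑ k, xs k * (A *ᵥ ys) k < ∑ k, xs k * v := by
      apply Finset.sum_lt_sum
      · intro k _
        exact mul_le_mul_of_nonneg_left (hAyle k) (hx.1 k)
      · exact ⟨i, Finset.mem_univ i, by exact mul_lt_mul_of_pos_left hlt hi⟩
    rw [hsum, ← Finset.sum_mul, hx.2, one_mul] at hlt2
    exact lt_irrefl v hlt2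
  have hAtx : ∀ j, 0 < ys j → (Aᵀ *ᵥ xs) j = v := by
    intro j hj
    by_contra hne
    have hlt : v < (Aᵀ *ᵥ xs) j := lt_of_le_of_ne (hAtxge j) (Ne.symm hne)
    have hsum : ∑ k, ys k * (Aᵀ *ᵥ xs) k = v := by
      rw [hv, show (∑ k, ys k * (Aᵀ *ᵥ xs) k) = ys ⬝ᵥ (Aᵀ *ᵥ xs) from rfl,
        Matrix.dotProduct_mulVec, Matrix.vecMul_transpose, dotProduct_comm]
    have hlt2 : ∑ k, ys k * v < ∑ k, ys k * (Aᵀ *ᵥ xs) k := by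
      apply Finset.sum_lt_sum
      · intro k _
        exact mul_le_mul_of_nonneg_left (hAtxge k) (hy.1 k)
      · exact ⟨j, Finset.mem_univ j, by exact mul_lt_mul_of_pos_left hlt hj⟩
    rw [hsum, ← Finset.sum_mul, hy.2, one_mul] at hlt2
    exact lt_irrefl v hlt2
  -- Hessian terms
  have hH1 : ∀ i, ((A * Matrix.diagonal ys * Aᵀ) *ᵥ xs) i = v * (A *ᵥ ys) i := by
    intro i
    rw [← Matrix.mulVec_mulVec, ← Matrix.mulVec_mulVec]
    have hw : Matrix.diagonal ys *ᵥ (Aᵀ *ᵥ xs) = v • ys := by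
      funext j
      have hdj : (Matrix.diagonal ys *ᵥ (Aᵀ *ᵥ xs)) j = ys j * (Aᵀ *ᵥ xs) j := by
        simp [Matrix.mulVec, dotProduct, Matrix.diagonal_apply, ite_mul,
          Finset.sum_ite_eq, Finset.mem_univ]
      rw [hdj, Pi.smul_apply, smul_eq_mul]
      rcases lt_or_eq_of_le (hy.1 j) with hpos | hzero
      · rw [hAtx j hpos]; ring
      · rw [← hzero]; ring
    rw [hw, Matrix.mulVec_smul, Pi.smul_apply, smul_eq_mul]
  have hH2 : ∀ j, ((Aᵀ * Matrix.diagonal xs * A) *ᵥ ys) j = v * (Aᵀ *ᵥ xs) j := by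
    intro j
    rw [← Matrix.mulVec_mulVec, ← Matrix.mulVec_mulVec]
    have hw : Matrix.diagonal xs *ᵥ (A *ᵥ ys) = v • xs := by
      funext i
      have hdi : (Matrix.diagonal xs *ᵥ (A *ᵥ ys)) i = xs i * (A *ᵥ ys) i := by
        simp [Matrix.mulVec, dotProduct, Matrix.diagonal_apply, ite_mul,
          Finset.sum_ite_eq, Finset.mem_univ]
      rw [hdi, Pi.smul_apply, smul_eq_mul]
      rcases lt_or_eq_of_le (hx.1 i) with hpos | hzero
      · rw [hAy i hpos]; ring
      · rw [← hzero]; ring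
    rw [hw, Matrix.mulVec_smul, Pi.smul_apply, smul_eq_mul]
  constructor
  · -- first component
    set c : ℝ := h * v - h * ε * (v * v) with hc
    have hterm : ∀ k, xs k * exp (h * (A *ᵥ ys) k
        - h * ε * ((A * Matrix.diagonal ys * Aᵀ) *ᵥ xs) k) = xs k * exp c := by
      intro k
      rcases lt_or_eq_of_le (hx.1 k) with hpos | hzero
      · rw [hH1 k, hAy k hpos, hc]
      · rw [← hzero]; ring
    have hden : (∑ k : Fin n, xs k * exp (h * (A *ᵥ ys) k
        - h * ε * ((A * Matrix.diagonal ys * Aᵀ) *ᵥ xs) k)) = exp c := by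
      rw [Finset.sum_congr rfl (fun k _ => hterm k), ← Finset.sum_mul, hx.2, one_mul]
    intro i
    rw [hden, hterm i, mul_div_assoc, div_self (exp_ne_zero c), mul_one]
  · set c : ℝ := -(h * v) - h * ε * (v * v) with hc
    have hterm : ∀ k, ys k * exp (-(h * (Aᵀ *ᵥ xs) k)
        - h * ε * ((Aᵀ * Matrix.diagonal xs * A) *ᵥ ys) k) = ys k * exp c := by
      intro k
      rcases lt_or_eq_of_le (hy.1 k) with hpos | hzero
      · rw [hH2 k, hAtx k hpos, hc]
      · rw [← hzero]; ring
    have hden : (∑ k : Fin m, ys k * exp (-(h * (Aᵀ *ᵥ xs) k)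
        - h * ε * ((Aᵀ * Matrix.diagonal xs * A) *ᵥ ys) k)) = exp c := by
      rw [Finset.sum_congr rfl (fun k _ => hterm k), ← Finset.sum_mul, hy.2, one_mul]
    intro j
    rw [hden, hterm j, mul_div_assoc, div_self (exp_ne_zero c), mul_one]
end
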